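/- arXiv:1205.4673 — 2 statements merged into one kernel-verified Lean document; each statement's English description precedes it below -/
import Mathlib

section
/- Let A be a d×n random matrix whose entries A_{ij} are i.i.d. standard Gaussian N(0,1) random variables, and let S be a finite set of vectors in ℝ^n with |S| ≤ N. Then for every t with 0 < t < 1, P(there exists h ∈ S with ‖A h‖_2^2 < (1-t) d ‖h‖_2^2) ≤ N · exp((d/2)(t + log(1-t))). -/
/-!
For a fixed `h`, the row products `Wᵢ = ∑ⱼ Aᵢⱼ hⱼ` are jointly Gaussian and pairwise uncorrelated,
hence i.i.d. `N(0, ‖h‖²)`. Since `𝔼 exp(-λ Wᵢ²) = (1 + 2λ‖h‖²)^(-1/2)`, the Chernoff bound with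
`λ = t / (2 (1 - t) ‖h‖²)` gives `exp((d/2)(t + log(1 - t)))` for the event of this `h`; a union
bound over `S` finishes the proof.
-/

open MeasureTheory ProbabilityTheory ENNReal
open scoped NNReal

lemma mgf_sq_gaussianReal {v : ℝ≥0} {s : ℝ} (hs : 2 * s * v < 1) :
    mgf (fun x => x ^ 2) (gaussianReal 0 v) s = (√(1 - 2 * s * v))⁻¹ := by
  rcases eq_or_ne v 0 with rfl | hv
  · simp [mgf]
  have hvR : 0 < (v : ℝ) := by positivity
  have hpdf : ∀ x, gaussianPDFReal 0 v x * Real.exp (s * x ^ 2) =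
      (√(2 * Real.pi * v))⁻¹ * Real.exp (-((1 - 2 * s * v) / (2 * v)) * x ^ 2) := by
    intro x
    rw [gaussianPDFReal, mul_assoc, ← Real.exp_add]
    congr 2
    field_simp
    ring
  rw [mgf, integral_gaussianReal_eq_integral_smul hv]
  simp_rw [smul_eq_mul, hpdf]
  rw [integral_const_mul, integral_gaussian, ← Real.sqrt_inv, ← Real.sqrt_mul (by positivity),
    ← Real.sqrt_inv]
  congr 1
  field_simp

section GaussianFamily

variable {Ω : Type*} [MeasurableSpace Ω] {P : Measure Ω}

lemma hasLaw_of_map_eq {E : Type*} [MeasurableSpace E] {X : Ω → E} {μ : Measure E} [NeZero μ]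
    (h : P.map X = μ) : HasLaw X μ P :=
  ⟨AEMeasurable.of_map_ne_zero (h ▸ NeZero.ne μ), h⟩

lemma mgf_sum_sq_of_iIndepFun {ι : Type*} [Fintype ι] {W : ι → Ω → ℝ} {v : ℝ≥0}
    (hindep : iIndepFun W P) (hW : ∀ i, HasLaw (W i) (gaussianReal 0 v) P) {s : ℝ}
    (hs : 2 * s * v < 1) :
    mgf (∑ i, (fun x => x ^ 2) ∘ W i) P s = (√(1 - 2 * s * v))⁻¹ ^ Fintype.card ι := by
  rw [(hindep.comp (fun _ x => x ^ 2) fun _ => by fun_prop).mgf_sum₀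
    fun i => (hW i).aemeasurable.pow_const 2]
  have hsq : ∀ i, mgf ((fun x => x ^ 2) ∘ W i) P s = (√(1 - 2 * s * v))⁻¹ := fun i => by
    rw [← mgf_map (X := fun x => x ^ 2) (t := s) (hW i).aemeasurable (by fun_prop), (hW i).map_eq,
      mgf_sq_gaussianReal hs]
  simp [hsq]

lemma exp_mul_sqrt_one_sub_pow {t : ℝ} (ht : t < 1) (k : ℕ) :
    Real.exp (t * k / 2) * √(1 - t) ^ k = Real.exp (k / 2 * (t + Real.log (1 - t))) := by
  rw [Real.sqrt_eq_rpow, ← Real.rpow_natCast, ← Real.rpow_mul (by linarith),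
    Real.rpow_def_of_pos (by linarith), ← Real.exp_add]
  ring_nf

lemma measure_sum_sq_lt_le_of_iIndepFun {ι : Type*} [Fintype ι] {W : ι → Ω → ℝ} {v : ℝ≥0}
    (hindep : iIndepFun W P) (hW : ∀ i, HasLaw (W i) (gaussianReal 0 v) P)
    {t : ℝ} (ht0 : 0 ≤ t) (ht1 : t < 1) :
    P {ω | ∑ i, W i ω ^ 2 < (1 - t) * Fintype.card ι * v} ≤
      ENNReal.ofReal (Real.exp (Fintype.card ι / 2 * (t + Real.log (1 - t)))) := by
  have := hindep.isProbabilityMeasure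
  have hsum_nonneg : ∀ ω, 0 ≤ ∑ i, W i ω ^ 2 := fun ω => Finset.sum_nonneg fun i _ => sq_nonneg _
  rcases eq_or_ne v 0 with rfl | hv
  · refine le_of_eq_of_le ?_ zero_le
    simp only [NNReal.coe_zero, mul_zero, measure_eq_zero_iff_ae_notMem]
    exact ae_of_all _ fun ω hω => (hsum_nonneg ω).not_gt hω
  have hvR : 0 < (v : ℝ) := by positivity
  have h1t : 0 < 1 - t := by linarith
  -- minimises `exp (l c) * (1 + 2 l v) ^ (-card ι / 2)` over `l ≥ 0`
  set l := t / (2 * (1 - t) * v)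
  have hl : 0 ≤ l := by positivity
  set c := (1 - t) * Fintype.card ι * v
  set Y : Ω → ℝ := ∑ i, (fun x => x ^ 2) ∘ W i
  have hY : ∀ ω, Y ω = ∑ i, W i ω ^ 2 := fun ω => by simp [Y]
  have hmgf : mgf Y P (-l) = √(1 - t) ^ Fintype.card ι := by
    have h2lv : 1 - 2 * (-l) * v = (1 - t)⁻¹ := by
      simp only [l]
      field_simp
      ring
    rw [mgf_sum_sq_of_iIndepFun hindep hW (by nlinarith), h2lv, Real.sqrt_inv, inv_inv]
  have hint : Integrable (fun ω => Real.exp (-l * Y ω)) P := by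
    have hYm : AEMeasurable Y P :=
      Finset.aemeasurable_sum _ fun i _ => (hW i).aemeasurable.pow_const 2
    refine (integrable_const (1 : ℝ)).mono' (by fun_prop) (ae_of_all _ fun ω => ?_)
    rw [Real.norm_of_nonneg (Real.exp_nonneg _), Real.exp_le_one_iff, hY]
    exact mul_nonpos_of_nonpos_of_nonneg (neg_nonpos.2 hl) (hsum_nonneg ω)
  calc P {ω | ∑ i, W i ω ^ 2 < c} ≤ P {ω | Y ω ≤ c} :=
        measure_mono fun ω hω => show Y ω ≤ c by rw [hY]; exact le_of_lt hω
    _ = ENNReal.ofReal (P.real {ω | Y ω ≤ c}) := (ofReal_measureReal).symm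
    _ ≤ ENNReal.ofReal (Real.exp (-(-l) * c) * mgf Y P (-l)) :=
        ENNReal.ofReal_le_ofReal (measure_le_le_exp_mul_mgf c (neg_nonpos.2 hl) hint)
    _ = _ := by
        rw [hmgf, ← exp_mul_sqrt_one_sub_pow ht1]
        congr 3
        simp only [l, c]
        field_simp

lemma covariance_eq_ite_of_iIndepFun {α : Type*} [DecidableEq α] {X : α → Ω → ℝ}
    (hindep : iIndepFun X P) (hX : ∀ p, HasLaw (X p) (gaussianReal 0 1) P) (p q : α) :
    cov[X p, X q; P] = if p = q then 1 else 0 := by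
  split_ifs with hpq
  · subst hpq
    rw [covariance_self (hX p).aemeasurable, (hX p).variance_eq, variance_id_gaussianReal,
      NNReal.coe_one]
  · exact (hindep.indepFun hpq).covariance_eq_zero (hX p).hasGaussianLaw.memLp_two
      (hX q).hasGaussianLaw.memLp_two

variable {ι κ : Type*} {X : ι → κ → Ω → ℝ}

lemma covariance_sum_mul_sum_of_iIndepFun [DecidableEq ι] [Fintype κ]
    (hindep : iIndepFun (fun p : ι × κ => X p.1 p.2) P)
    (hX : ∀ i j, HasLaw (X i j) (gaussianReal 0 1) P) (h : κ → ℝ) (i k : ι) :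
    cov[fun ω => ∑ j, X i j ω * h j, fun ω => ∑ j, X k j ω * h j; P] =
      if i = k then ∑ j, h j ^ 2 else 0 := by
  classical
  have := hindep.isProbabilityMeasure
  have hL2 : ∀ i j, MemLp (fun ω => X i j ω * h j) 2 P :=
    fun i j => (hX i j).hasGaussianLaw.memLp_two.mul_const _
  have hentries := fun j l =>
    covariance_eq_ite_of_iIndepFun hindep (fun p => hX p.1 p.2) (i, j) (k, l)
  rw [covariance_fun_sum_fun_sum (hL2 i) (hL2 k)]
  simp_rw [covariance_mul_const_left, covariance_mul_const_right, hentries, Prod.mk.injEq]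
  split_ifs with hik
  · simp [hik, sq]
  · simp [hik]

lemma hasGaussianLaw_sum_mul [Fintype ι] [Fintype κ]
    (hindep : iIndepFun (fun p : ι × κ => X p.1 p.2) P)
    (hX : ∀ i j, HasLaw (X i j) (gaussianReal 0 1) P) (h : κ → ℝ) :
    HasGaussianLaw (fun ω i => ∑ j, X i j ω * h j) P := by
  have hG := hindep.hasGaussianLaw fun (p : ι × κ) => (hX p.1 p.2).hasGaussianLaw
  let L : (ι × κ → ℝ) →L[ℝ] (ι → ℝ) :=
    ContinuousLinearMap.pi fun i => ∑ j, h j • ContinuousLinearMap.proj (i, j)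
  refine (hG.map_fun L).congr (ae_of_all _ fun ω => funext fun i => ?_)
  simp [L, mul_comm]

lemma iIndepFun_sum_mul [Fintype ι] [DecidableEq ι] [Fintype κ]
    (hindep : iIndepFun (fun p : ι × κ => X p.1 p.2) P)
    (hX : ∀ i j, HasLaw (X i j) (gaussianReal 0 1) P) (h : κ → ℝ) :
    iIndepFun (fun i ω => ∑ j, X i j ω * h j) P :=
  (hasGaussianLaw_sum_mul hindep hX h).iIndepFun_of_covariance_eq_zero fun i k hik => by
    rw [covariance_sum_mul_sum_of_iIndepFun hindep hX, if_neg hik]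

lemma hasLaw_sum_mul [Fintype ι] [DecidableEq ι] [Fintype κ]
    (hindep : iIndepFun (fun p : ι × κ => X p.1 p.2) P)
    (hX : ∀ i j, HasLaw (X i j) (gaussianReal 0 1) P) (h : κ → ℝ) (i : ι) :
    HasLaw (fun ω => ∑ j, X i j ω * h j) (gaussianReal 0 (∑ j, h j ^ 2).toNNReal) P := by
  have hW := (hasGaussianLaw_sum_mul hindep hX h).eval i
  have hmean : P[fun ω => ∑ j, X i j ω * h j] = 0 := by
    rw [integral_finsetSum _ fun j _ => (hX i j).hasGaussianLaw.integrable.mul_const _]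
    simp [integral_mul_const, (hX i _).integral_eq]
  refine ⟨hW.aemeasurable, ?_⟩
  rw [hW.map_eq_gaussianReal, hmean, ← covariance_self hW.aemeasurable,
    covariance_sum_mul_sum_of_iIndepFun hindep hX, if_pos rfl]

end GaussianFamily

theorem matrix_norm_sq_uniform_lower_tail_general
    {Ω : Type*} [MeasureSpace Ω]
    (d n : ℕ)
    (A : Fin d → Fin n → Ω → ℝ)
    (hindep : iIndepFun (fun p : Fin d × Fin n => A p.1 p.2) ℙ)
    (hA : ∀ i j, Measure.map (A i j) ℙ = gaussianReal 0 1)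
    (S : Finset (Fin n → ℝ)) (N : ℕ) (hS : S.card ≤ N)
    (t : ℝ) (ht0 : 0 < t) (ht1 : t < 1) :
    ℙ {ω | ∃ h ∈ S,
        ∑ i, (∑ j, A i j ω * h j) ^ 2 < (1 - t) * d * ∑ j, (h j) ^ 2} ≤
      (N : ℝ≥0∞) * ENNReal.ofReal (Real.exp (((d : ℝ) / 2) * (t + Real.log (1 - t)))) := by
  set bound := ENNReal.ofReal (Real.exp (((d : ℝ) / 2) * (t + Real.log (1 - t))))
  have hlaw : ∀ i j, HasLaw (A i j) (gaussianReal 0 1) ℙ := fun i j => hasLaw_of_map_eq (hA i j)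
  have hsingle : ∀ h : Fin n → ℝ,
      ℙ {ω | ∑ i, (∑ j, A i j ω * h j) ^ 2 < (1 - t) * d * ∑ j, (h j) ^ 2} ≤ bound := by
    intro h
    have := measure_sum_sq_lt_le_of_iIndepFun (iIndepFun_sum_mul hindep hlaw h)
      (hasLaw_sum_mul hindep hlaw h) ht0.le ht1
    rwa [Fintype.card_fin, Real.coe_toNNReal _ (by positivity)] at this
  calc ℙ {ω | ∃ h ∈ S, ∑ i, (∑ j, A i j ω * h j) ^ 2 < (1 - t) * d * ∑ j, (h j) ^ 2}
      = ℙ (⋃ h ∈ S, {ω | ∑ i, (∑ j, A i j ω * h j) ^ 2 < (1 - t) * d * ∑ j, (h j) ^ 2}) := by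
        congr 1
        ext ω
        simp
    _ ≤ ∑ h ∈ S, ℙ {ω | ∑ i, (∑ j, A i j ω * h j) ^ 2 < (1 - t) * d * ∑ j, (h j) ^ 2} :=
        measure_biUnion_finset_le S _
    _ ≤ ∑ _h ∈ S, bound := Finset.sum_le_sum fun h _ => hsingle h
    _ ≤ N * bound := by
        rw [Finset.sum_const, nsmul_eq_mul]
        gcongr

/-- Uniform lower-tail bound on `‖A h‖₂²` over a finite set `S`, for `A` with i.i.d. `N(0,1)`
entries. -/
theorem matrix_norm_sq_uniform_lower_tail
    {Ω : Type*} [MeasureSpace Ω] [IsProbabilityMeasure (ℙ : Measure Ω)]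
    (d n : ℕ) (hd : 0 < d) (hn : 0 < n)
    (A : Fin d → Fin n → Ω → ℝ)
    (hindep : iIndepFun (fun p : Fin d × Fin n => A p.1 p.2) ℙ)
    (hA : ∀ i j, Measure.map (A i j) ℙ = gaussianReal 0 1)
    (S : Finset (Fin n → ℝ)) (N : ℕ) (hS : S.card ≤ N)
    (t : ℝ) (ht0 : 0 < t) (ht1 : t < 1) :
    ℙ {ω | ∃ h ∈ S,
        ∑ i, (∑ j, A i j ω * h j) ^ 2 < (1 - t) * d * ∑ j, (h j) ^ 2} ≤
      (N : ℝ≥0∞) * ENNReal.ofReal (Real.exp (((d : ℝ) / 2) * (t + Real.log (1 - t)))) :=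
  matrix_norm_sq_uniform_lower_tail_general d n A hindep hA S N hS t ht0 ht1
end

section
/- Let A be a d×n random matrix whose entries A_{ij} are i.i.d. standard Gaussian N(0,1) random variables, and let S be a finite set of vectors in ℝ^n with |S| ≤ N. Then for every τ with 0 < τ < 1, P(there exists h ∈ S with ‖A h‖_2 < τ √d ‖h‖_2) ≤ N · exp((d/2)(1 - τ^2 + 2 log τ)). -/
open MeasureTheory ProbabilityTheory ENNReal

/-!
For `h ≠ 0` the coordinates of `A h` are independent `N(0, ‖h‖²)` variables, so
`‖A h‖² / ‖h‖²` is a `χ²_d` variable, whose Laplace transform is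
`E exp(-λ χ²_d) = (1 + 2λ)^(-d/2)`. The Chernoff bound at `λ = (1 - τ²) / (2τ²)` gives
`P(χ²_d ≤ τ² d) ≤ τ^d exp(d (1 - τ²) / 2)`, and a union bound over `S` finishes.
-/

namespace ProbabilityTheory

open Real

variable {Ω : Type*} {mΩ : MeasurableSpace Ω} {P : Measure Ω}

lemma iIndepFun.curry {ι κ 𝓧 : Type*} [Countable ι] [Countable κ] [MeasurableSpace 𝓧]
    {X : ι → κ → Ω → 𝓧} (mX : ∀ i j, AEMeasurable (X i j) P)
    (h : iIndepFun (fun p : ι × κ ↦ X p.1 p.2) P) :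
    iIndepFun (fun i ω j ↦ X i j ω) P := by
  have := h.isProbabilityMeasure
  have _ i j := Measure.isProbabilityMeasure_map (mX i j)
  have mrow i : AEMeasurable (fun ω j ↦ X i j ω) P := aemeasurable_pi_iff.2 (mX i)
  have mall : AEMeasurable (fun ω (p : ι × κ) ↦ X p.1 p.2 ω) P :=
    aemeasurable_pi_iff.2 fun p ↦ mX p.1 p.2
  have rows i : P.map (fun ω j ↦ X i j ω) = Measure.infinitePi (fun j ↦ P.map (X i j)) :=
    (h.precomp (Prod.mk_right_injective i)).map_fun_eq_infinitePi_map₀ (mrow i)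
  rw [iIndepFun_iff_map_fun_eq_infinitePi_map₀ (aemeasurable_pi_iff.2 mrow)]
  simp_rw [rows]
  rw [← Measure.infinitePi_map_curry (fun i j ↦ P.map (X i j)),
    ← h.map_fun_eq_infinitePi_map₀ mall, AEMeasurable.map_map_of_aemeasurable (by fun_prop) mall]
  rfl

lemma map_sum_mul_eq_gaussianReal {ι : Type*} [Fintype ι] {X : ι → Ω → ℝ}
    (hX : iIndepFun X P) (hlaw : ∀ i, P.map (X i) = gaussianReal 0 1) (h : ι → ℝ) :
    P.map (fun ω ↦ ∑ i, X i ω * h i) = gaussianReal 0 (∑ i, h i ^ 2).toNNReal := by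
  have := hX.isProbabilityMeasure
  have mX i : AEMeasurable (X i) P :=
    AEMeasurable.of_map_ne_zero (by simp [hlaw, IsProbabilityMeasure.ne_zero])
  have hterm i : P.map (fun ω ↦ X i ω * h i) = gaussianReal 0 (.mk (h i ^ 2) (sq_nonneg _)) := by
    change P.map ((· * h i) ∘ X i) = _
    rw [← AEMeasurable.map_map_of_aemeasurable (by fun_prop) (mX i), hlaw,
      gaussianReal_map_mul_const]
    simp
  refine Measure.ext_of_charFun (funext fun t ↦ ?_)
  rw [(hX.comp (fun i x ↦ x * h i) (fun i ↦ by fun_prop)).charFun_map_fun_sum_eq_prod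
    (fun i ↦ (mX i).mul_const _)]
  simp only [hterm, Finset.prod_apply, charFun_gaussianReal, ← Complex.exp_sum,
    Real.coe_toNNReal _ (Finset.sum_nonneg fun i _ ↦ sq_nonneg (h i))]
  push_cast
  simp [Finset.sum_mul, Finset.sum_div]

lemma mgf_sq_gaussianReal {v : NNReal} {t : ℝ} (ht : 2 * t * v < 1) :
    mgf (fun x ↦ x ^ 2) (gaussianReal 0 v) t = (√(1 - 2 * t * v))⁻¹ := by
  rcases eq_or_ne v 0 with rfl | hv
  · simp [gaussianReal_zero_var, mgf]
  have hv' : (0 : ℝ) < v := by positivity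
  have hdensity (x : ℝ) : gaussianPDFReal 0 v x • exp (t * x ^ 2)
      = (√(2 * π * v))⁻¹ * exp (-((1 - 2 * t * v) / (2 * v)) * x ^ 2) := by
    rw [gaussianPDFReal, smul_eq_mul, mul_assoc, ← exp_add]
    congr 2
    field_simp
    ring
  rw [mgf, integral_gaussianReal_eq_integral_smul hv]
  simp_rw [hdensity]
  rw [integral_const_mul, integral_gaussian,
    show π / ((1 - 2 * t * v) / (2 * v)) = (2 * π * v) / (1 - 2 * t * v) by field_simp,
    sqrt_div (by positivity)]
  have : √(2 * π * v) ≠ 0 := by positivity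
  field_simp

lemma measure_sum_sq_le_le_exp {ι : Type*} [Fintype ι] {Y : ι → Ω → ℝ} {v : NNReal} (hv : v ≠ 0)
    (hY : iIndepFun Y P) (hlaw : ∀ i, P.map (Y i) = gaussianReal 0 v)
    {τ : ℝ} (hτ0 : 0 < τ) (hτ1 : τ ≤ 1) :
    P {ω | ∑ i, Y i ω ^ 2 ≤ τ ^ 2 * Fintype.card ι * v} ≤
      ENNReal.ofReal (exp (Fintype.card ι / 2 * (1 - τ ^ 2 + 2 * log τ))) := by
  have := hY.isProbabilityMeasure
  have mY i : AEMeasurable (Y i) P :=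
    AEMeasurable.of_map_ne_zero (by simp [hlaw, IsProbabilityMeasure.ne_zero])
  have hv' : (0 : ℝ) < v := by positivity
  -- the Chernoff parameter `-λ / v` with `1 + 2λ = τ⁻²`
  set t : ℝ := -(1 - τ ^ 2) / (2 * τ ^ 2 * v) with ht_def
  have ht : t ≤ 0 := div_nonpos_of_nonpos_of_nonneg (by nlinarith) (by positivity)
  have hmgf_sq i : mgf (fun ω ↦ Y i ω ^ 2) P t = τ := by
    have h2tv : 1 - 2 * t * v = τ⁻¹ ^ 2 := by rw [ht_def]; field_simp; ring
    rw [show (fun ω ↦ Y i ω ^ 2) = (fun x ↦ x ^ 2) ∘ Y i from rfl,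
      ← mgf_map (mY i) (by fun_prop), hlaw, mgf_sq_gaussianReal (by nlinarith [sq_nonneg τ⁻¹]),
      h2tv, sqrt_sq (by positivity), inv_inv]
  have hmgf : mgf (fun ω ↦ ∑ i, Y i ω ^ 2) P t = τ ^ Fintype.card ι := by
    rw [show (fun ω ↦ ∑ i, Y i ω ^ 2) = ∑ i, (fun x ↦ x ^ 2) ∘ Y i by ext; simp,
      (hY.comp (fun _ x ↦ x ^ 2) fun _ ↦ by fun_prop).mgf_sum₀ (fun i ↦ (mY i).pow_const 2)]
    simp [Function.comp_def, hmgf_sq]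
  have hint : Integrable (fun ω ↦ exp (t * ∑ i, Y i ω ^ 2)) P := by
    refine .of_bound (by fun_prop) 1 (ae_of_all _ fun ω ↦ ?_)
    rw [norm_of_nonneg (exp_nonneg _), exp_le_one_iff]
    exact mul_nonpos_of_nonpos_of_nonneg ht (Finset.sum_nonneg fun i _ ↦ sq_nonneg _)
  have chernoff := measure_le_le_exp_mul_mgf (τ ^ 2 * Fintype.card ι * v) ht hint
  rw [← ofReal_measureReal]
  refine ENNReal.ofReal_le_ofReal (chernoff.trans_eq ?_)
  have hpow : τ ^ Fintype.card ι = exp (Fintype.card ι * log τ) := by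
    rw [exp_nat_mul, exp_log hτ0]
  rw [hmgf, hpow, ← exp_add]
  congr 1
  rw [ht_def]
  field_simp

lemma measure_sqrt_sum_sq_mul_lt_le_exp {ι κ : Type*} [Fintype ι] [Fintype κ]
    {A : ι → κ → Ω → ℝ} (hindep : iIndepFun (fun p : ι × κ ↦ A p.1 p.2) P)
    (hA : ∀ i j, P.map (A i j) = gaussianReal 0 1) (h : κ → ℝ)
    {τ : ℝ} (hτ0 : 0 < τ) (hτ1 : τ ≤ 1) :
    P {ω | √(∑ i, (∑ j, A i j ω * h j) ^ 2) < τ * √(Fintype.card ι) * √(∑ j, h j ^ 2)} ≤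
      ENNReal.ofReal (exp (Fintype.card ι / 2 * (1 - τ ^ 2 + 2 * log τ))) := by
  have := hindep.isProbabilityMeasure
  have mA i j : AEMeasurable (A i j) P :=
    AEMeasurable.of_map_ne_zero (by simp [hA, IsProbabilityMeasure.ne_zero])
  obtain hv | hv := (show 0 ≤ ∑ j, h j ^ 2 by positivity).eq_or_lt
  · simp [← hv, not_lt_of_ge (sqrt_nonneg _)]
  have hrows : iIndepFun (fun i ω ↦ ∑ j, A i j ω * h j) P :=
    (hindep.curry mA).comp (fun _ x ↦ ∑ j, x j * h j) fun _ ↦ by fun_prop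
  have hrow_law i : P.map (fun ω ↦ ∑ j, A i j ω * h j) = gaussianReal 0 (∑ j, h j ^ 2).toNNReal :=
    map_sum_mul_eq_gaussianReal (hindep.precomp (Prod.mk_right_injective i)) (hA i) h
  refine (measure_mono fun ω hω ↦ ?_).trans
    (measure_sum_sq_le_le_exp (by simpa using hv) hrows hrow_law hτ0 hτ1)
  have := lt_sq_of_sqrt_lt hω
  rw [mul_pow, mul_pow, sq_sqrt (by positivity), sq_sqrt hv.le] at this
  simpa [Real.coe_toNNReal _ hv.le] using this.le

end ProbabilityTheory

theorem matrix_norm_uniform_lower_tail_general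
    {Ω : Type*} [MeasureSpace Ω] [IsProbabilityMeasure (ℙ : Measure Ω)]
    (d n : ℕ)
    (A : Fin d → Fin n → Ω → ℝ)
    (hindep : iIndepFun (fun p : Fin d × Fin n => A p.1 p.2) ℙ)
    (hA : ∀ i j, Measure.map (A i j) ℙ = gaussianReal 0 1)
    (S : Finset (Fin n → ℝ)) (N : ℕ) (hS : S.card ≤ N)
    (τ : ℝ) (hτ0 : 0 < τ) (hτ1 : τ < 1) :
    ℙ {ω | ∃ h ∈ S,
        Real.sqrt (∑ i, (∑ j, A i j ω * h j) ^ 2)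
          < τ * Real.sqrt d * Real.sqrt (∑ j, (h j) ^ 2)} ≤
      (N : ℝ≥0∞) *
        ENNReal.ofReal (Real.exp (((d : ℝ) / 2) * (1 - τ ^ 2 + 2 * Real.log τ))) := by
  rw [show ∀ p : (Fin n → ℝ) → Ω → Prop, {ω | ∃ h ∈ S, p h ω} = ⋃ h ∈ S, {ω | p h ω} by
    intro p; ext; simp]
  refine (measure_biUnion_finset_le S _).trans ?_
  calc _ ≤ ∑ _h ∈ S, ENNReal.ofReal (Real.exp ((d / 2) * (1 - τ ^ 2 + 2 * Real.log τ))) :=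
        Finset.sum_le_sum fun h _ ↦ by
          simpa using measure_sqrt_sum_sq_mul_lt_le_exp hindep hA h hτ0 hτ1.le
    _ ≤ _ := by
      rw [Finset.sum_const, nsmul_eq_mul]
      gcongr

/-- Uniform lower-tail bound on `‖A h‖₂` over a finite set `S`, for `A` with i.i.d. `N(0,1)`
entries. -/
theorem matrix_norm_uniform_lower_tail
    {Ω : Type*} [MeasureSpace Ω] [IsProbabilityMeasure (ℙ : Measure Ω)]
    (d n : ℕ) (hd : 0 < d) (hn : 0 < n)
    (A : Fin d → Fin n → Ω → ℝ)
    (hindep : iIndepFun (fun p : Fin d × Fin n => A p.1 p.2) ℙ)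
    (hA : ∀ i j, Measure.map (A i j) ℙ = gaussianReal 0 1)
    (S : Finset (Fin n → ℝ)) (N : ℕ) (hS : S.card ≤ N)
    (τ : ℝ) (hτ0 : 0 < τ) (hτ1 : τ < 1) :
    ℙ {ω | ∃ h ∈ S,
        Real.sqrt (∑ i, (∑ j, A i j ω * h j) ^ 2)
          < τ * Real.sqrt d * Real.sqrt (∑ j, (h j) ^ 2)} ≤
      (N : ℝ≥0∞) *
        ENNReal.ofReal (Real.exp (((d : ℝ) / 2) * (1 - τ ^ 2 + 2 * Real.log τ))) :=
  matrix_norm_uniform_lower_tail_general d n A hindep hA S N hS τ hτ0 hτ1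
end
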